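/- Let q = q(n) ∈ (0,1) with q = o(1), let s_a ∈ (0,1] be a constant, let m = m(n) be a sequence of positive integers, and let Δ_x > 0 be a constant such that Δ_x m q s_a² ≥ 3 log n for all large n. Set x = Δ_x m q s_a² / log(1/q). If X_n is a Binomial(m, q² s_a²) random variable, then n² · P(X_n > x) → 0 as n → ∞. -/

import Mathlib

open MeasureTheory ProbabilityTheory Filter

noncomputable section

namespace AttrAlign

/-- The law of a `Binomial(m, r)` random variable, as a measure on `ℕ`
(the success probability `r` is clamped to `[0,1]`). -/
def binomMeasure (m : ℕ) (r : ℝ) : Measure ℕ :=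
  ((PMF.binomial (min (Real.toNNReal r) 1) (min_le_right _ _) m).map
    (fun k => (k : ℕ))).toMeasure

end AttrAlign

open AttrAlign

/-! Chernoff: for `t ≥ 0`, `P(X ≥ x) ≤ exp (m p (eᵗ - 1) - t x)` for `X ∼ Binomial(m, p)`.
With `p = q² s_a²`, `A = m q s_a²` and `t = (9/10) log (1/q)` one gets `m p eᵗ = A q^(1/10)`,
which is at most `Δ_x A / 10` once `q` is small, while `t x = (9/10) Δ_x A`. The exponent is then
at most `-(4/5) Δ_x A ≤ -(12/5) log n`, which beats the factor `n²`. -/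

open scoped unitInterval NNReal
open Real

lemma Real.mul_exp_mul_log_one_div {q : ℝ} (hq : 0 < q) (a : ℝ) :
    q * exp (a * log (1 / q)) = q ^ (1 - a) := by
  rw [rpow_def_of_pos hq, one_div, log_inv, ← exp_log hq, ← exp_add, log_exp]
  ring_nf

lemma tendsto_sq_mul_exp_neg_mul_log {a : ℝ} (ha : 2 < a) :
    Tendsto (fun n : ℕ => (n : ℝ) ^ 2 * exp (-(a * log n))) atTop (nhds 0) := by
  have hlog : Tendsto (fun n : ℕ => (2 - a) * log n) atTop atBot :=
    (tendsto_log_atTop.comp tendsto_natCast_atTop_atTop).const_mul_atTop_of_neg (by linarith)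
  refine (tendsto_exp_atBot.comp hlog).congr' ?_
  filter_upwards [eventually_gt_atTop 0] with n hn
  have hn : (0 : ℝ) < n := by exact_mod_cast hn
  rw [Function.comp_apply, sub_mul, sub_eq_add_neg, exp_add, ← exp_log (pow_pos hn 2), log_pow,
    Nat.cast_ofNat]

namespace ProbabilityTheory

lemma mgf_binomial (n : ℕ) (p : I) (t : ℝ) :
    mgf (fun k : ℕ => (k : ℝ)) Bin(n, p) t = (p * exp t + (1 - p)) ^ n := by
  rw [mgf, integral_binomial, add_pow, Nat.range_succ_eq_Iic]
  refine Finset.sum_congr rfl fun k _ => ?_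
  rw [smul_eq_mul, mul_pow, ← exp_nat_mul, mul_comm t]
  ring

lemma binomial_real_ge_le_exp (n : ℕ) (p : I) (x : ℝ) {t : ℝ} (ht : 0 ≤ t) :
    Bin(n, p).real {k | x ≤ (k : ℝ)} ≤ exp (n * p * (exp t - 1) - t * x) :=
  calc Bin(n, p).real {k | x ≤ (k : ℝ)}
      ≤ exp (-t * x) * (p * exp t + (1 - p)) ^ n := by
        rw [← mgf_binomial]
        exact measure_ge_le_exp_mul_mgf x ht (integrable_binomial _)
    _ ≤ exp (-t * x) * exp (p * (exp t - 1)) ^ n := by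
        gcongr
        · exact add_nonneg (mul_nonneg p.2.1 (exp_nonneg t)) (sub_nonneg.2 p.2.2)
        · linarith [add_one_le_exp (p * (exp t - 1))]
    _ = exp (n * p * (exp t - 1) - t * x) := by
        rw [← exp_nat_mul, ← exp_add]
        ring_nf

end ProbabilityTheory

namespace AttrAlign

lemma binomMeasure_eq_binomial (M : ℕ) (r : ℝ) :
    binomMeasure M r = Bin(M, Set.projIcc 0 1 zero_le_one r) := by
  have hp : ((min r.toNNReal 1 : ℝ≥0) : ℝ) = Set.projIcc 0 1 zero_le_one r := by
    simp only [NNReal.coe_min, Real.coe_toNNReal', NNReal.coe_one, Set.coe_projIcc]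
    grind
  -- `binomMeasure` maps the identity over the monadic lift of a `PMF (Fin (M + 1))` to `PMF ℕ`.
  have hmap : binomMeasure M r =
      (PMF.map Fin.val (PMF.binomial _ (min_le_right r.toNNReal 1) M)).toMeasure := by
    rw [binomMeasure]
    congr 1
    exact PMF.map_id _
  refine Measure.ext_of_singleton fun k => ?_
  rw [hmap, PMF.toMeasure_apply_singleton _ _ (measurableSet_singleton k), PMF.map_apply,
    binomial_singleton, ← hp, tsum_fintype]
  rcases le_or_gt k M with hk | hk
  · rw [PMF.binomial_apply_of_le hk (min_le_right _ _), Finset.sum_eq_single (Fin.ofNat (M + 1) k)]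
    · simp [Nat.mod_eq_of_lt (Nat.lt_succ_of_le hk)]
    · rintro a - ha
      rw [if_neg]
      rintro rfl
      exact ha (by simp)
    · simp
  · rw [Nat.choose_eq_zero_of_lt hk, Nat.cast_zero, zero_mul, zero_mul, ENNReal.ofReal_zero]
    exact Finset.sum_eq_zero fun i _ => if_neg (by have := i.isLt; omega)

lemma binomMeasure_tail_le (M : ℕ) {q s Δ : ℝ} (hq0 : 0 < q) (hq1 : q < 1)
    (hqΔ : q ^ (1 / 10 : ℝ) ≤ Δ / 10) :
    (binomMeasure M (q ^ 2 * s ^ 2) {k : ℕ | Δ * (M * q * s ^ 2) / log (1 / q) < k}).toReal ≤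
      exp (-(4 / 5) * (Δ * (M * q * s ^ 2))) := by
  set A := (M : ℝ) * q * s ^ 2
  set L := log (1 / q)
  set p := Set.projIcc 0 1 zero_le_one (q ^ 2 * s ^ 2)
  have hA : 0 ≤ A := by positivity
  have hL : 0 < L := log_pos (by rw [one_div]; exact one_lt_inv₀ hq0 |>.2 hq1)
  have hp : (p : ℝ) ≤ q ^ 2 * s ^ 2 := by
    rw [Set.coe_projIcc]
    exact max_le (by positivity) (min_le_right _ _)
  have hchernoff := binomial_real_ge_le_exp M p (Δ * A / L) (t := 9 / 10 * L) (by positivity)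
  have hdrift : (M : ℝ) * p * (exp (9 / 10 * L) - 1) ≤ A * (Δ / 10) :=
    calc (M : ℝ) * p * (exp (9 / 10 * L) - 1) ≤ M * (q ^ 2 * s ^ 2) * exp (9 / 10 * L) := by
          have := one_le_exp (by positivity : 0 ≤ 9 / 10 * L)
          gcongr
          linarith
      _ = A * q ^ (1 / 10 : ℝ) := by
          rw [show (1 / 10 : ℝ) = 1 - 9 / 10 by norm_num, ← mul_exp_mul_log_one_div hq0]
          ring
      _ ≤ A * (Δ / 10) := by gcongr
  have hshift : 9 / 10 * L * (Δ * A / L) = 9 / 10 * (Δ * A) := by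
    field_simp
  rw [binomMeasure_eq_binomial, ← measureReal_def]
  calc Bin(M, p).real {k : ℕ | Δ * A / L < k}
      ≤ Bin(M, p).real {k : ℕ | Δ * A / L ≤ k} :=
        measureReal_mono fun k (hk : Δ * A / L < k) => hk.le
    _ ≤ exp (-(4 / 5) * (Δ * A)) := by
        refine hchernoff.trans (exp_le_exp.2 ?_)
        linarith

end AttrAlign

theorem binomial_upper_tail_attrRich
    (q : ℕ → ℝ) (m : ℕ → ℕ) (sa Δx : ℝ)
    (hq01 : ∀ n, 0 < q n ∧ q n < 1)
    (hq : Tendsto q atTop (nhds 0))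
    (hΔx : 0 < Δx)
    (hΔx' : ∀ᶠ n : ℕ in atTop, 3 * Real.log n ≤ Δx * ((m n : ℝ) * q n * sa ^ 2)) :
    Tendsto (fun n : ℕ => (n : ℝ) ^ 2 *
        (binomMeasure (m n) ((q n) ^ 2 * sa ^ 2)
          {k : ℕ | Δx * ((m n : ℝ) * q n * sa ^ 2) / Real.log (1 / q n) < (k : ℝ)}).toReal)
      atTop (nhds 0) := by
  have hroot : Tendsto (fun n => q n ^ (1 / 10 : ℝ)) atTop (nhds 0) := by
    simpa using hq.rpow_const (p := 1 / 10) (Or.inr (by norm_num))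
  have hsmall : ∀ᶠ n in atTop, q n ^ (1 / 10 : ℝ) ≤ Δx / 10 :=
    hroot.eventually (eventually_le_nhds (by positivity))
  refine squeeze_zero' (Eventually.of_forall fun n => ?_) ?_
    (tendsto_sq_mul_exp_neg_mul_log (a := 12 / 5) (by norm_num))
  · positivity
  filter_upwards [hΔx', hsmall] with n hlog hqn
  calc _ ≤ (n : ℝ) ^ 2 * exp (-(4 / 5) * (Δx * ((m n : ℝ) * q n * sa ^ 2))) := by
        gcongr
        exact binomMeasure_tail_le (m n) (hq01 n).1 (hq01 n).2 hqn
    _ ≤ (n : ℝ) ^ 2 * exp (-(12 / 5 * log n)) := by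
        gcongr
        linarith
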